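/- arXiv:2510.19494 — 3 statements merged into one kernel-verified Lean document; each statement's English description precedes it below -/
import Mathlib

section
/- Let Z ∈ ℕ and let c : ℤ → ℂ satisfy c_k = 0 for |k| > Z and c_{-k} = conj(c_k) for all k. Then there exist a dimension d ∈ ℕ, a Hermitian matrix H ∈ M_d(ℂ), a unit vector Γ ∈ ℂ^d, and a Hermitian matrix M ∈ M_d(ℂ) such that for all x ∈ ℝ, ⟨Γ, e^{ixH} M e^{-ixH} Γ⟩ = Σ_{k=-Z}^{Z} c_k e^{ikx}. That is, a single-layer quantum model can realize any finite set of Fourier coefficients of a real-valued trigonometric polynomial. -/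
/-!
With `H = diag(-Z, …, Z)` the model `⟨Γ, e^{ixH} M e^{-ixH} Γ⟩` is a combination of the
frequencies `λⱼ - λₗ` weighted by `conj Γⱼ Mⱼₗ Γₗ`. Take `Γ` uniform and `M = A + Aᴴ`, where the
only nonzero column of `A` is the one at eigenvalue `0`, filled with the coefficients `c_k`
rescaled by `(2Z + 1) / 2`. The `A`-part of the model is then `p / 2` for the trigonometric
polynomial `p`, the `Aᴴ`-part is its conjugate, and `p` is real because `c_{-k} = conj c_k`.
-/

open Matrix

/-- The univariate quantum model `x ↦ ⟨Γ, e^{ixH} M e^{-ixH} Γ⟩`. -/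
noncomputable def quantumModel {d : ℕ} (H M : Matrix (Fin d) (Fin d) ℂ)
    (Γ : Fin d → ℂ) (x : ℝ) : ℂ :=
  star Γ ⬝ᵥ ((NormedSpace.exp ((Complex.I * x) • H) * M *
      NormedSpace.exp ((-(Complex.I * x)) • H)).mulVec Γ)

open Complex Finset ComplexConjugate

lemma Finset.sum_Icc_neg_comp_neg {α M : Type*} [AddCommGroup α] [PartialOrder α]
    [IsOrderedAddMonoid α] [LocallyFiniteOrder α] [AddCommMonoid M] (f : α → M) (n : α) :
    ∑ k ∈ Icc (-n) n, f (-k) = ∑ k ∈ Icc (-n) n, f k :=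
  sum_nbij' Neg.neg Neg.neg (by simp [neg_le, and_comm]) (by simp [neg_le, and_comm])
    (by simp) (by simp) (by simp)

lemma Int.sum_Icc_neg_natCast_eq_sum_fin {M : Type*} [AddCommMonoid M] (f : ℤ → M) (n : ℕ) :
    ∑ k ∈ Icc (-(n : ℤ)) n, f k = ∑ j : Fin (2 * n + 1), f (j - n) := by
  have hlen : ((n : ℤ) + 1 - -(n : ℤ)).toNat = 2 * n + 1 := by omega
  rw [Int.Icc_eq_finset_map, sum_map, hlen, ← Fin.sum_univ_eq_sum_range]
  simp [sub_eq_neg_add]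

lemma Matrix.star_dotProduct_conjTranspose_mulVec {n α : Type*} [Fintype n] [CommSemiring α]
    [StarRing α] (N : Matrix n n α) (v : n → α) :
    star v ⬝ᵥ (Nᴴ *ᵥ v) = star (star v ⬝ᵥ (N *ᵥ v)) := by
  rw [dotProduct_mulVec, ← star_mulVec, star_dotProduct]

noncomputable def trigPolynomial (Z : ℕ) (c : ℤ → ℂ) (x : ℝ) : ℂ :=
  ∑ k ∈ Icc (-(Z : ℤ)) Z, c k * exp (I * k * x)

lemma conj_trigPolynomial {Z : ℕ} {c : ℤ → ℂ} (hconj : ∀ k, c (-k) = conj (c k)) (x : ℝ) :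
    conj (trigPolynomial Z c x) = trigPolynomial Z c x := by
  have hterm : ∀ k : ℤ, conj (c k * exp (I * k * x)) = c (-k) * exp (I * ↑(-k) * x) := by
    intro k
    rw [hconj, map_mul, ← exp_conj]
    simp [conj_ofReal]
  simp only [trigPolynomial, map_sum, hterm]
  exact sum_Icc_neg_comp_neg (fun k => c k * exp (I * k * x)) (Z : ℤ)

lemma trigPolynomial_eq_sum_fin (Z : ℕ) (c : ℤ → ℂ) (x : ℝ) :
    trigPolynomial Z c x = ∑ j : Fin (2 * Z + 1), c (j - Z) * exp (I * ↑(j - Z : ℤ) * x) :=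
  Int.sum_Icc_neg_natCast_eq_sum_fin _ Z

noncomputable def uniformState (d : ℕ) : Fin d → ℂ := fun _ => ((√d)⁻¹ : ℝ)

section QuantumModel

variable {d : ℕ}

lemma conj_uniformState_mul (j l : Fin d) :
    conj (uniformState d j) * uniformState d l = (d : ℂ)⁻¹ := by
  simp [uniformState, ← ofReal_mul, ← mul_inv]

lemma star_uniformState_dotProduct_self (hd : d ≠ 0) :
    star (uniformState d) ⬝ᵥ uniformState d = 1 := by
  simp only [dotProduct, Pi.star_apply, star_def, conj_uniformState_mul, sum_const, card_univ,
    Fintype.card_fin, nsmul_eq_mul]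
  exact mul_inv_cancel₀ (Nat.cast_ne_zero.mpr hd)

lemma quantumModel_add (H M₁ M₂ : Matrix (Fin d) (Fin d) ℂ) (Γ : Fin d → ℂ) (x : ℝ) :
    quantumModel H (M₁ + M₂) Γ x = quantumModel H M₁ Γ x + quantumModel H M₂ Γ x := by
  simp only [quantumModel, mul_add, add_mul, add_mulVec, dotProduct_add]

lemma quantumModel_conjTranspose {H : Matrix (Fin d) (Fin d) ℂ} (hH : H.IsHermitian)
    (M : Matrix (Fin d) (Fin d) ℂ) (Γ : Fin d → ℂ) (x : ℝ) :
    quantumModel H Mᴴ Γ x = conj (quantumModel H M Γ x) := by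
  have hU : (NormedSpace.exp ((I * x) • H))ᴴ = NormedSpace.exp ((-(I * x)) • H) := by
    rw [← exp_conjTranspose, conjTranspose_smul, hH.eq]
    simp
  rw [quantumModel, quantumModel, ← hU, ← star_def, ← star_dotProduct_conjTranspose_mulVec,
    conjTranspose_mul, conjTranspose_mul, conjTranspose_conjTranspose, mul_assoc]

lemma quantumModel_diagonal (μ : Fin d → ℂ) (M : Matrix (Fin d) (Fin d) ℂ) (Γ : Fin d → ℂ)
    (x : ℝ) : quantumModel (diagonal μ) M Γ x =
      ∑ j, ∑ l, star (Γ j) * M j l * Γ l * exp (I * x * (μ j - μ l)) := by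
  have hexp : ∀ z : ℂ, NormedSpace.exp (z • diagonal μ) = diagonal fun j => exp (z * μ j) := by
    intro z
    rw [← diagonal_smul, exp_diagonal]
    congr 1
    ext j
    simp [Complex.exp_eq_exp_ℂ]
  simp only [quantumModel, hexp, diagonal_mul, mul_diagonal, dotProduct, mulVec, mul_sum]
  refine sum_congr rfl fun j _ => sum_congr rfl fun l _ => ?_
  rw [show I * x * (μ j - μ l) = I * x * μ j + -(I * x) * μ l by ring, exp_add, Pi.star_apply]
  ring

lemma quantumModel_diagonal_vecMulVec_single (μ a : Fin d → ℂ) (i : Fin d) (Γ : Fin d → ℂ)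
    (x : ℝ) : quantumModel (diagonal μ) (vecMulVec a (Pi.single i 1)) Γ x =
      ∑ j, star (Γ j) * a j * Γ i * exp (I * x * (μ j - μ i)) := by
  simp [quantumModel_diagonal, vecMulVec_apply, Pi.single_apply]

end QuantumModel

theorem exists_quantumModel_realizing_fourier_coeffs_general (Z : ℕ) (c : ℤ → ℂ)
    (hconj : ∀ k : ℤ, c (-k) = (starRingEnd ℂ) (c k)) :
    ∃ (d : ℕ) (H M : Matrix (Fin d) (Fin d) ℂ) (Γ : Fin d → ℂ),
      H.IsHermitian ∧ M.IsHermitian ∧ star Γ ⬝ᵥ Γ = 1 ∧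
      ∀ x : ℝ, quantumModel H M Γ x =
        ∑ k ∈ Finset.Icc (-(Z : ℤ)) (Z : ℤ), c k * Complex.exp (Complex.I * k * x) := by
  let center : Fin (2 * Z + 1) := ⟨Z, by omega⟩
  let μ : Fin (2 * Z + 1) → ℂ := fun j => ((j - Z : ℤ) : ℂ)
  let A := vecMulVec (fun j : Fin (2 * Z + 1) => ((2 * Z + 1 : ℕ) / 2 : ℂ) * c (j - Z))
    (Pi.single center 1)
  have hH : (diagonal μ).IsHermitian := isHermitian_diagonal_of_self_adjoint _ (by ext; simp [μ])
  have hA (x : ℝ) : quantumModel (diagonal μ) A (uniformState _) x = trigPolynomial Z c x / 2 := by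
    rw [quantumModel_diagonal_vecMulVec_single, trigPolynomial_eq_sum_fin, sum_div]
    refine sum_congr rfl fun j _ => ?_
    have hcenter : μ center = 0 := by simp [μ, center]
    calc _ = conj (uniformState _ j) * uniformState _ center * ((2 * Z + 1 : ℕ) : ℂ) *
          (c (j - Z) * exp (I * ↑(j - Z : ℤ) * x)) / 2 := by
          rw [hcenter, sub_zero, star_def, mul_right_comm I]
          ring
      _ = _ := by
          rw [conj_uniformState_mul, inv_mul_cancel₀ (Nat.cast_ne_zero.mpr (by omega)), one_mul]
  refine ⟨2 * Z + 1, diagonal μ, A + Aᴴ, uniformState _, hH, IsSelfAdjoint.add_star_self A,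
    star_uniformState_dotProduct_self (by omega), fun x => ?_⟩
  rw [quantumModel_add, quantumModel_conjTranspose hH, hA, map_div₀, conj_trigPolynomial hconj,
    map_ofNat, add_halves]
  rfl

/-- A single-layer quantum model can realize any finite set of Fourier coefficients
of a real-valued trigonometric polynomial. -/
theorem exists_quantumModel_realizing_fourier_coeffs (Z : ℕ) (c : ℤ → ℂ)
    (hsupp : ∀ k : ℤ, (Z : ℤ) < |k| → c k = 0)
    (hconj : ∀ k : ℤ, c (-k) = (starRingEnd ℂ) (c k)) :
    ∃ (d : ℕ) (H M : Matrix (Fin d) (Fin d) ℂ) (Γ : Fin d → ℂ),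
      H.IsHermitian ∧ M.IsHermitian ∧ star Γ ⬝ᵥ Γ = 1 ∧
      ∀ x : ℝ, quantumModel H M Γ x =
        ∑ k ∈ Finset.Icc (-(Z : ℤ)) (Z : ℤ), c k * Complex.exp (Complex.I * k * x) :=
  exists_quantumModel_realizing_fourier_coeffs_general Z c hconj
end

section
/- (Convergence in C⁰, univariate realizable form.) Let f* : ℝ → ℝ be continuous, let U be a compact subset of the open interval (0, 2π), and let ε > 0. Then there exist a dimension d ∈ ℕ, a Hermitian matrix H ∈ M_d(ℂ), a unit vector Γ ∈ ℂ^d, and a Hermitian matrix M ∈ M_d(ℂ) such that sup_{x ∈ U} |⟨Γ, e^{ixH} M e^{-ixH} Γ⟩ − f*(x)| < ε. -/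
/-!
Extend `f*|_U` by a cutoff to a continuous function on the circle `ℝ / 2πℤ` and approximate it
uniformly by a trigonometric polynomial `P(x) = ∑ₘ cₘ e^{imx}` (density of the Fourier basis);
then `|Re P - f*| ≤ |P - f*| < ε` on `U`. Every `x ↦ Re ∑ᵢ cᵢ e^{iωᵢx}` is a quantum model: take
`H = diag(0, ω₁, …, ωₙ)`, `Γ` the uniform unit vector and `M` a multiple of `A + Aᴴ`, where `A`
has the coefficients `cᵢ` in its first column. Then `⟨Γ, e^{ixH} A e^{-ixH} Γ⟩` only pairs the
coordinate of frequency `0` with the others, so it is a multiple of `∑ᵢ cᵢ e^{iωᵢx}`.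
-/

open Matrix

namespace Matrix

variable {n : Type*}

theorem isHermitian_diagonal_ofReal [DecidableEq n] (μ : n → ℝ) :
    (diagonal fun j => (μ j : ℂ)).IsHermitian :=
  isHermitian_diagonal_iff.mpr fun j => Complex.conj_ofReal (μ j)

variable [Fintype n]

theorem star_dotProduct_conjTranspose_mulVec_s2 {R : Type*} [CommSemiring R] [StarRing R]
    (A : Matrix n n R) (v : n → R) :
    star v ⬝ᵥ Aᴴ *ᵥ v = star (star v ⬝ᵥ A *ᵥ v) := by
  rw [mulVec_conjTranspose, dotProduct_star, star_star, dotProduct_mulVec]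

theorem star_dotProduct_add_conjTranspose_mulVec (A : Matrix n n ℂ) (v : n → ℂ) :
    star v ⬝ᵥ (A + Aᴴ) *ᵥ v = 2 * (star v ⬝ᵥ A *ᵥ v).re := by
  rw [add_mulVec, dotProduct_add, star_dotProduct_conjTranspose_mulVec_s2, Complex.star_def,
    Complex.add_conj, Complex.ofReal_mul, Complex.ofReal_ofNat]

theorem dotProduct_vecMulVec_mulVec {R : Type*} [CommSemiring R] (u a b v : n → R) :
    u ⬝ᵥ vecMulVec a b *ᵥ v = (u ⬝ᵥ a) * (b ⬝ᵥ v) := by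
  rw [vecMulVec_mulVec, dotProduct_smul, MulOpposite.smul_eq_mul_unop, MulOpposite.unop_op]

theorem exp_smul_diagonal_mulVec [DecidableEq n] (t : ℂ) (μ v : n → ℂ) :
    NormedSpace.exp (t • diagonal μ) *ᵥ v = fun j => Complex.exp (t * μ j) * v j := by
  rw [← diagonal_smul, Matrix.exp_diagonal]
  ext j
  simp [mulVec_diagonal, Complex.exp_eq_exp_ℂ]

end Matrix

theorem Complex.inv_ofReal_sqrt_mul_self (d : ℕ) :
    ((√d : ℝ) : ℂ)⁻¹ * ((√d : ℝ) : ℂ)⁻¹ = (d : ℂ)⁻¹ := by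
  rw [← mul_inv, ← Complex.ofReal_mul, Real.mul_self_sqrt (Nat.cast_nonneg d),
    Complex.ofReal_natCast]

theorem star_dotProduct_self_const_inv_sqrt (d : ℕ) [NeZero d] :
    star (fun _ : Fin d => ((√d : ℝ) : ℂ)⁻¹) ⬝ᵥ (fun _ => ((√d : ℝ) : ℂ)⁻¹) = 1 := by
  simp only [dotProduct, Pi.star_apply, Complex.star_def, map_inv₀, Complex.conj_ofReal,
    Complex.inv_ofReal_sqrt_mul_self, Finset.sum_const, Finset.card_univ, Fintype.card_fin,
    nsmul_eq_mul]
  exact mul_inv_cancel₀ (Nat.cast_ne_zero.mpr (NeZero.ne d))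

theorem quantumModel_eq_star_dotProduct_mulVec {d : ℕ} {H : Matrix (Fin d) (Fin d) ℂ}
    (hH : H.IsHermitian) (M : Matrix (Fin d) (Fin d) ℂ) (Γ : Fin d → ℂ) (x : ℝ) :
    quantumModel H M Γ x =
      star (NormedSpace.exp ((-(Complex.I * x)) • H) *ᵥ Γ) ⬝ᵥ
        M *ᵥ (NormedSpace.exp ((-(Complex.I * x)) • H) *ᵥ Γ) := by
  have hadj : NormedSpace.exp ((Complex.I * x) • H) =
      (NormedSpace.exp ((-(Complex.I * x)) • H))ᴴ := by
    rw [← Matrix.exp_conjTranspose, conjTranspose_smul, hH.eq]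
    simp [Complex.conj_ofReal]
  rw [quantumModel, hadj, star_mulVec, ← dotProduct_mulVec]
  simp only [mulVec_mulVec, Matrix.mul_assoc]

theorem quantumModel_diagonal_vecMulVec_single_s2 {d : ℕ} [NeZero d] (μ : Fin d → ℝ)
    (a : Fin d → ℂ) (k : Fin d) (x : ℝ) :
    quantumModel (diagonal fun j => (μ j : ℂ))
        (((d : ℝ) / 2) • (vecMulVec a (Pi.single k 1) + (vecMulVec a (Pi.single k 1))ᴴ))
        (fun _ => ((√d : ℝ) : ℂ)⁻¹) x =
      ((∑ j, a j * Complex.exp (Complex.I * x * (μ j - μ k))).re : ℂ) := by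
  set v : Fin d → ℂ := fun j => Complex.exp (-(Complex.I * x) * μ j) * ((√d : ℝ) : ℂ)⁻¹
  have hconj : ∀ j, star (Complex.exp (-(Complex.I * x) * μ j)) =
      Complex.exp (Complex.I * x * μ j) := fun j => by
    rw [Complex.star_def, ← Complex.exp_conj]
    simp
  have hpair : (star v ⬝ᵥ a) * v k =
      ((d : ℝ)⁻¹ : ℝ) * ∑ j, a j * Complex.exp (Complex.I * x * (μ j - μ k)) := by
    simp only [v, dotProduct, Finset.sum_mul, Finset.mul_sum, Pi.star_apply, star_mul', hconj,
      Complex.star_def, map_inv₀, Complex.conj_ofReal]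
    refine Finset.sum_congr rfl fun j _ => ?_
    rw [show Complex.I * x * (μ j - μ k) = Complex.I * x * μ j + -(Complex.I * x) * μ k by ring,
      Complex.exp_add]
    push_cast
    linear_combination (a j * Complex.exp (Complex.I * x * μ j) *
      Complex.exp (-(Complex.I * x) * μ k)) * Complex.inv_ofReal_sqrt_mul_self d
  rw [quantumModel_eq_star_dotProduct_mulVec (isHermitian_diagonal_ofReal μ),
    exp_smul_diagonal_mulVec, smul_mulVec, dotProduct_smul,
    star_dotProduct_add_conjTranspose_mulVec, dotProduct_vecMulVec_mulVec, single_dotProduct,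
    one_mul, hpair, Complex.re_ofReal_mul, Complex.real_smul]
  have hd : (d : ℂ) ≠ 0 := Nat.cast_ne_zero.mpr (NeZero.ne d)
  push_cast
  field_simp

def IsQuantumModel (f : ℝ → ℂ) : Prop :=
  ∃ (d : ℕ) (H M : Matrix (Fin d) (Fin d) ℂ) (Γ : Fin d → ℂ),
    H.IsHermitian ∧ M.IsHermitian ∧ star Γ ⬝ᵥ Γ = 1 ∧ ∀ x, quantumModel H M Γ x = f x

theorem isQuantumModel_re_sum_exp {ι : Type*} (s : Finset ι) (ω : ι → ℝ) (c : ι → ℂ) :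
    IsQuantumModel fun x => ((∑ i ∈ s, c i * Complex.exp (Complex.I * x * ω i)).re : ℂ) := by
  set e := s.equivFin
  set μ : Fin (s.card + 1) → ℝ := Fin.cons 0 fun j => ω (e.symm j)
  set a : Fin (s.card + 1) → ℂ := Fin.cons 0 fun j => c (e.symm j)
  refine ⟨s.card + 1, diagonal fun j => (μ j : ℂ),
    ((s.card + 1 : ℕ) / 2 : ℝ) • (vecMulVec a (Pi.single 0 1) + (vecMulVec a (Pi.single 0 1))ᴴ),
    fun _ => ((√(s.card + 1 : ℕ) : ℝ) : ℂ)⁻¹, isHermitian_diagonal_ofReal μ,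
    (isHermitian_add_transpose_self _).smul (IsSelfAdjoint.all _),
    star_dotProduct_self_const_inv_sqrt _, fun x => ?_⟩
  rw [quantumModel_diagonal_vecMulVec_single_s2, Fin.sum_univ_succ]
  simp only [a, μ, Fin.cons_zero, Fin.cons_succ, zero_mul, zero_add, Complex.ofReal_zero,
    sub_zero]
  rw [e.symm.sum_comp (fun i => c i * Complex.exp (Complex.I * x * ω i)),
    Finset.sum_coe_sort s (fun i => c i * Complex.exp (Complex.I * x * ω i))]

theorem AddCircle.exists_continuousMap_eqOn_of_subset_Ioo {T : ℝ} [Fact (0 < T)] {f : ℝ → ℂ}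
    (hf : Continuous f) {U : Set ℝ} (hUc : IsCompact U) (hUT : U ⊆ Set.Ioo 0 T) :
    ∃ g : C(AddCircle T, ℂ), ∀ x ∈ U, g x = f x := by
  obtain ⟨φ, hφ_out, hφ_U, -⟩ := exists_continuous_zero_one_of_isClosed
    isOpen_Ioo.isClosed_compl hUc.isClosed
    (Set.disjoint_left.mpr fun _ hx hxU => hx (hUT hxU))
  have hvanish : ∀ y ∉ Set.Ioo 0 T, (φ y : ℂ) * f y = 0 := fun y hy => by
    simp [hφ_out hy]
  have hends : (φ 0 : ℂ) * f 0 = φ T * f T := by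
    rw [hvanish 0 (by simp), hvanish T (by simp)]
  refine ⟨⟨AddCircle.liftIco T 0 fun y => (φ y : ℂ) * f y,
    AddCircle.liftIco_zero_continuous hends (by fun_prop)⟩, fun x hx => ?_⟩
  simp [AddCircle.liftIco_zero_coe_apply (Set.Ioo_subset_Ico_self (hUT hx)), hφ_U hx]

theorem exists_finsupp_sum_fourier_near {T : ℝ} [Fact (0 < T)] (g : C(AddCircle T, ℂ))
    {ε : ℝ} (hε : 0 < ε) :
    ∃ c : ℤ →₀ ℂ, ∀ y, ‖∑ m ∈ c.support, c m * fourier m y - g y‖ < ε := by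
  have hg : g ∈ (Submodule.span ℂ (Set.range (@fourier T))).topologicalClosure := by
    rw [span_fourier_closure_eq_top]; trivial
  obtain ⟨P, hP, hPg⟩ := Metric.mem_closure_iff.mp hg ε hε
  obtain ⟨c, rfl⟩ := Finsupp.mem_span_range_iff_exists_finsupp.mp hP
  refine ⟨c, fun y => ?_⟩
  calc ‖∑ m ∈ c.support, c m * fourier m y - g y‖
      = dist (g y) ((c.sum fun m a => a • fourier m) y) := by
        simp [dist_comm, dist_eq_norm, Finsupp.sum]
    _ ≤ dist g (c.sum fun m a => a • fourier m) := ContinuousMap.dist_apply_le_dist y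
    _ < ε := hPg

theorem fourier_coe_apply_two_pi (m : ℤ) (x : ℝ) :
    fourier m (x : AddCircle (2 * Real.pi)) = Complex.exp (Complex.I * x * m) := by
  rw [fourier_coe_apply]
  congr 1
  have hπ : (Real.pi : ℂ) ≠ 0 := Complex.ofReal_ne_zero.mpr Real.pi_ne_zero
  push_cast
  field_simp

/-- Convergence in `C⁰`: quantum models uniformly approximate continuous functions on
compact subsets of `(0, 2π)`. -/
theorem quantumModel_dense_C0 (fstar : ℝ → ℝ) (hfstar : Continuous fstar)
    (U : Set ℝ) (hUcomp : IsCompact U) (hU : U ⊆ Set.Ioo 0 (2 * Real.pi))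
    (ε : ℝ) (hε : 0 < ε) :
    ∃ (d : ℕ) (H M : Matrix (Fin d) (Fin d) ℂ) (Γ : Fin d → ℂ),
      H.IsHermitian ∧ M.IsHermitian ∧ star Γ ⬝ᵥ Γ = 1 ∧
      ∀ x ∈ U, ‖quantumModel H M Γ x - (fstar x : ℂ)‖ < ε := by
  have : Fact (0 < 2 * Real.pi) := ⟨Real.two_pi_pos⟩
  obtain ⟨g, hg⟩ := AddCircle.exists_continuousMap_eqOn_of_subset_Ioo
    (Complex.continuous_ofReal.comp hfstar) hUcomp hU
  obtain ⟨c, hc⟩ := exists_finsupp_sum_fourier_near g hε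
  obtain ⟨d, H, M, Γ, hH, hM, hΓ, hmodel⟩ :=
    isQuantumModel_re_sum_exp c.support (fun m => (m : ℝ)) c
  refine ⟨d, H, M, Γ, hH, hM, hΓ, fun x hx => ?_⟩
  set P := ∑ m ∈ c.support, c m * Complex.exp (Complex.I * x * m)
  have hP : ‖P - fstar x‖ < ε := by
    simpa only [fourier_coe_apply_two_pi, hg x hx, Function.comp_apply] using hc x
  calc ‖quantumModel H M Γ x - fstar x‖ = |(P - fstar x).re| := by
        rw [hmodel]
        simp only [Complex.ofReal_intCast]
        rw [← Complex.ofReal_sub, Complex.norm_real, Real.norm_eq_abs, Complex.sub_re,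
          Complex.ofReal_re]
    _ ≤ ‖P - fstar x‖ := Complex.abs_re_le_norm _
    _ < ε := hP
end

section
/- (Pricing identity via CDF Fourier coefficients, Method II.) Let a < c < b, set â = (3a−b)/2 and b̂ = (3b−a)/2, and let K ∈ ℕ. Let h : ℝ → ℝ be continuous on [a,b] and continuously differentiable on [a,c] and on [c,b], let f : ℝ → ℝ be continuous on [a,b], and let F : ℝ → ℝ be differentiable on [a,b] with F' = f on [a,b]. Suppose that on [a,b], F is given exactly by F(y) = A_0/2 + Σ_{k=1}^{K} (A_k cos(2πk(y−â)/(b̂−â)) + B_k sin(2πk(y−â)/(b̂−â))) for real coefficients A_k, B_k. Define C_k^a = ∫_a^c h'(y) cos(2πk(y−â)/(b̂−â)) dy, D_k^a = ∫_a^c h'(y) sin(2πk(y−â)/(b̂−â)) dy, C_k^b = ∫_c^b h'(y) cos(2πk(y−â)/(b̂−â)) dy, D_k^b = ∫_c^b h'(y) sin(2πk(y−â)/(b̂−â)) dy. Then ∫_a^b h(y) f(y) dy = h(b)F(b) − h(a)F(a) − ( A_0·C_0^a/2 + Σ_{k=1}^{K} (A_k·C_k^a + B_k·D_k^a) ) −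 ( A_0·C_0^b/2 + Σ_{k=1}^{K} (A_k·C_k^b + B_k·D_k^b) ). -/
open Real intervalIntegral
open MeasureTheory (volume)

/-!
On each of `[a, c]` and `[c, b]`, where `h` is `C¹`, integrate by parts to move the derivative
from `F` onto `h`: `∫ h f = [h F] - ∫ h' F`. Substituting the trigonometric expansion of `F`
and integrating term by term turns `∫ h' F` into the stated combination of the `A_k, B_k` with
the `C_k, D_k`; adding the two pieces, the boundary terms at `c` cancel.
-/

noncomputable def trigSum (K : ℕ) (A B : ℕ → ℝ) (θ : ℕ → ℝ → ℝ) (y : ℝ) : ℝ :=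
  A 0 / 2 + ∑ k ∈ Finset.Icc 1 K, (A k * cos (θ k y) + B k * sin (θ k y))

theorem integral_mul_trigSum {p q : ℝ} {g : ℝ → ℝ}
    (hg : IntervalIntegrable g volume p q)
    (K : ℕ) (A B : ℕ → ℝ) {θ : ℕ → ℝ → ℝ} (hθ : ∀ k, Continuous (θ k)) :
    ∫ y in p..q, g y * trigSum K A B θ y =
      A 0 / 2 * (∫ y in p..q, g y) + ∑ k ∈ Finset.Icc 1 K,
        (A k * (∫ y in p..q, g y * cos (θ k y)) + B k * ∫ y in p..q, g y * sin (θ k y)) := by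
  have hcos (k : ℕ) : IntervalIntegrable (fun y => g y * cos (θ k y)) volume p q :=
    hg.mul_continuousOn (by fun_prop)
  have hsin (k : ℕ) : IntervalIntegrable (fun y => g y * sin (θ k y)) volume p q :=
    hg.mul_continuousOn (by fun_prop)
  have hterm (k : ℕ) : IntervalIntegrable
      (fun y => A k * (g y * cos (θ k y)) + B k * (g y * sin (θ k y))) volume p q :=
    ((hcos k).const_mul (A k)).add ((hsin k).const_mul (B k))
  have hexpand : (fun y => g y * trigSum K A B θ y) = fun y => A 0 / 2 * g y +
      ∑ k ∈ Finset.Icc 1 K, (A k * (g y * cos (θ k y)) + B k * (g y * sin (θ k y))) := by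
    funext y
    simp only [trigSum, mul_add, Finset.mul_sum]
    ring_nf
  have hsum : IntervalIntegrable (fun y => ∑ k ∈ Finset.Icc 1 K,
      (A k * (g y * cos (θ k y)) + B k * (g y * sin (θ k y)))) volume p q := by
    simpa only [Finset.sum_fn] using IntervalIntegrable.sum (Finset.Icc 1 K) fun k _ => hterm k
  rw [hexpand, integral_add (hg.const_mul _) hsum, integral_finsetSum fun k _ => hterm k,
    integral_const_mul]
  congr 1
  refine Finset.sum_congr rfl fun k _ => ?_
  rw [integral_add ((hcos k).const_mul _) ((hsin k).const_mul _), integral_const_mul,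
    integral_const_mul]

theorem integral_mul_eq_sub_trigSum {p q : ℝ} (hpq : p ≤ q) {h g f F : ℝ → ℝ}
    (hh : ∀ y ∈ Set.Icc p q, HasDerivWithinAt h (g y) (Set.Icc p q) y)
    (hg : ContinuousOn g (Set.Icc p q))
    (hF : ∀ y ∈ Set.Icc p q, HasDerivWithinAt F (f y) (Set.Icc p q) y)
    (hf : IntervalIntegrable f volume p q)
    (K : ℕ) (A B : ℕ → ℝ) {θ : ℕ → ℝ → ℝ} (hθ : ∀ k, Continuous (θ k))
    (hFeq : Set.EqOn F (trigSum K A B θ) (Set.Icc p q)) :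
    ∫ y in p..q, h y * f y = h q * F q - h p * F p -
      (A 0 / 2 * (∫ y in p..q, g y) + ∑ k ∈ Finset.Icc 1 K,
        (A k * (∫ y in p..q, g y * cos (θ k y)) + B k * ∫ y in p..q, g y * sin (θ k y))) := by
  have hI : Set.uIcc p q = Set.Icc p q := Set.uIcc_of_le hpq
  have hgi : IntervalIntegrable g volume p q := hg.intervalIntegrable_of_Icc hpq
  rw [integral_mul_deriv_eq_deriv_mul_of_hasDerivWithinAt (hI ▸ hh) (hI ▸ hF) hgi hf,
    ← integral_mul_trigSum hgi K A B hθ,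
    integral_congr fun y hy => congrArg (g y * ·) (hFeq (hI ▸ hy))]

theorem pricing_identity_cdf_fourier_general (a c b : ℝ) (hac : a < c) (hcb : c < b)
    (ahat bhat : ℝ)
    (K : ℕ) (h f F : ℝ → ℝ) (g₁ g₂ : ℝ → ℝ)
    (hh1 : ∀ y ∈ Set.Icc a c, HasDerivWithinAt h (g₁ y) (Set.Icc a c) y)
    (hg₁ : ContinuousOn g₁ (Set.Icc a c))
    (hh2 : ∀ y ∈ Set.Icc c b, HasDerivWithinAt h (g₂ y) (Set.Icc c b) y)
    (hg₂ : ContinuousOn g₂ (Set.Icc c b))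
    (hfcont : ContinuousOn f (Set.Icc a b))
    (hF : ∀ y ∈ Set.Icc a b, HasDerivWithinAt F (f y) (Set.Icc a b) y)
    (A B : ℕ → ℝ)
    (hFser : ∀ y ∈ Set.Icc a b, F y = A 0 / 2 + ∑ k ∈ Finset.Icc 1 K,
      (A k * Real.cos (2 * π * k * (y - ahat) / (bhat - ahat)) +
        B k * Real.sin (2 * π * k * (y - ahat) / (bhat - ahat))))
    (Ca Da Cb Db : ℕ → ℝ)
    (hCa : ∀ k : ℕ, Ca k = ∫ y in a..c, g₁ y * Real.cos (2 * π * k * (y - ahat) / (bhat - ahat)))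
    (hDa : ∀ k : ℕ, Da k = ∫ y in a..c, g₁ y * Real.sin (2 * π * k * (y - ahat) / (bhat - ahat)))
    (hCb : ∀ k : ℕ, Cb k = ∫ y in c..b, g₂ y * Real.cos (2 * π * k * (y - ahat) / (bhat - ahat)))
    (hDb : ∀ k : ℕ, Db k = ∫ y in c..b, g₂ y * Real.sin (2 * π * k * (y - ahat) / (bhat - ahat))) :
    ∫ y in a..b, h y * f y =
      h b * F b - h a * F a -
        (A 0 * Ca 0 / 2 + ∑ k ∈ Finset.Icc 1 K, (A k * Ca k + B k * Da k)) -
        (A 0 * Cb 0 / 2 + ∑ k ∈ Finset.Icc 1 K, (A k * Cb k + B k * Db k)) := by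
  have hθ : ∀ k : ℕ, Continuous fun y => 2 * π * k * (y - ahat) / (bhat - ahat) := by
    intro k; fun_prop
  have hIac : Set.Icc a c ⊆ Set.Icc a b := Set.Icc_subset_Icc le_rfl hcb.le
  have hIcb : Set.Icc c b ⊆ Set.Icc a b := Set.Icc_subset_Icc hac.le le_rfl
  have hh_ac : ContinuousOn h (Set.Icc a c) := fun y hy => (hh1 y hy).continuousWithinAt
  have hh_cb : ContinuousOn h (Set.Icc c b) := fun y hy => (hh2 y hy).continuousWithinAt
  have hhf_ac : IntervalIntegrable (fun y => h y * f y) volume a c :=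
    (hh_ac.mul (hfcont.mono hIac)).intervalIntegrable_of_Icc hac.le
  have hhf_cb : IntervalIntegrable (fun y => h y * f y) volume c b :=
    (hh_cb.mul (hfcont.mono hIcb)).intervalIntegrable_of_Icc hcb.le
  rw [← integral_add_adjacent_intervals hhf_ac hhf_cb,
    integral_mul_eq_sub_trigSum hac.le hh1 hg₁ (fun y hy => (hF y (hIac hy)).mono hIac)
      ((hfcont.mono hIac).intervalIntegrable_of_Icc hac.le) K A B hθ
      (fun y hy => hFser y (hIac hy)),
    integral_mul_eq_sub_trigSum hcb.le hh2 hg₂ (fun y hy => (hF y (hIcb hy)).mono hIcb)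
      ((hfcont.mono hIcb).intervalIntegrable_of_Icc hcb.le) K A B hθ
      (fun y hy => hFser y (hIcb hy))]
  -- `Ca 0` and `Cb 0` are plain integrals of `g₁`, `g₂`, since the `k = 0` phase is `0`.
  simp only [hCa, hDa, hCb, hDb, Nat.cast_zero, mul_zero, zero_mul, zero_div, cos_zero, mul_one]
  ring

/-- Pricing identity via CDF Fourier coefficients (Method II): if the CDF `F` agrees on
`[a,b]` with a truncated trigonometric Fourier series on the extended interval
`[â, b̂] = [(3a−b)/2, (3b−a)/2]`, then the integral `∫_a^b h f` can be expressed through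
the Fourier coefficients of `F` and the payoff-derivative integrals `C_k^a, D_k^a, C_k^b, D_k^b`. -/
theorem pricing_identity_cdf_fourier (a c b : ℝ) (hac : a < c) (hcb : c < b)
    (ahat bhat : ℝ) (hahat : ahat = (3 * a - b) / 2) (hbhat : bhat = (3 * b - a) / 2)
    (K : ℕ) (h f F : ℝ → ℝ) (g₁ g₂ : ℝ → ℝ)
    (hhcont : ContinuousOn h (Set.Icc a b))
    (hh1 : ∀ y ∈ Set.Icc a c, HasDerivWithinAt h (g₁ y) (Set.Icc a c) y)
    (hg₁ : ContinuousOn g₁ (Set.Icc a c))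
    (hh2 : ∀ y ∈ Set.Icc c b, HasDerivWithinAt h (g₂ y) (Set.Icc c b) y)
    (hg₂ : ContinuousOn g₂ (Set.Icc c b))
    (hfcont : ContinuousOn f (Set.Icc a b))
    (hF : ∀ y ∈ Set.Icc a b, HasDerivWithinAt F (f y) (Set.Icc a b) y)
    (A B : ℕ → ℝ)
    (hFser : ∀ y ∈ Set.Icc a b, F y = A 0 / 2 + ∑ k ∈ Finset.Icc 1 K,
      (A k * Real.cos (2 * π * k * (y - ahat) / (bhat - ahat)) +
        B k * Real.sin (2 * π * k * (y - ahat) / (bhat - ahat))))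
    (Ca Da Cb Db : ℕ → ℝ)
    (hCa : ∀ k : ℕ, Ca k = ∫ y in a..c, g₁ y * Real.cos (2 * π * k * (y - ahat) / (bhat - ahat)))
    (hDa : ∀ k : ℕ, Da k = ∫ y in a..c, g₁ y * Real.sin (2 * π * k * (y - ahat) / (bhat - ahat)))
    (hCb : ∀ k : ℕ, Cb k = ∫ y in c..b, g₂ y * Real.cos (2 * π * k * (y - ahat) / (bhat - ahat)))
    (hDb : ∀ k : ℕ, Db k = ∫ y in c..b, g₂ y * Real.sin (2 * π * k * (y - ahat) / (bhat - ahat))) :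
    ∫ y in a..b, h y * f y =
      h b * F b - h a * F a -
        (A 0 * Ca 0 / 2 + ∑ k ∈ Finset.Icc 1 K, (A k * Ca k + B k * Da k)) -
        (A 0 * Cb 0 / 2 + ∑ k ∈ Finset.Icc 1 K, (A k * Cb k + B k * Db k)) :=
  pricing_identity_cdf_fourier_general a c b hac hcb ahat bhat K h f F g₁ g₂ hh1 hg₁ hh2 hg₂ hfcont
    hF A B hFser Ca Da Cb Db hCa hDa hCb hDb
end
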